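/- For all natural numbers n, m, j such that (n mod 2^j) + m < 2^j, every bit of n + m at position j or higher equals the corresponding bit of n: for all j' ≥ j, testBit (n + m) j' = testBit n j'. Hence when a new task of m samples arrives and no carry propagates to bit j, all local models with indices ≥ j remain unchanged. -/

import Mathlib

namespace Nat

theorem add_div_eq_of_mod_add_lt {n m k : ℕ} (h : n % k + m < k) : (n + m) / k = n / k := by
  have hm : m < k := by omega
  rw [add_div_eq_of_add_mod_lt (by rwa [mod_eq_of_lt hm]), div_eq_of_lt hm, add_zero]

theorem testBit_eq_of_div_two_pow_eq {x y j : ℕ} (hxy : x / 2 ^ j = y / 2 ^ j) {i : ℕ}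
    (hi : j ≤ i) : x.testBit i = y.testBit i := by
  obtain ⟨d, rfl⟩ := exists_add_of_le hi
  rw [add_comm j d, ← testBit_div_two_pow, ← testBit_div_two_pow, hxy]

end Nat

theorem high_bits_unchanged (n m j : ℕ) (h : n % 2 ^ j + m < 2 ^ j) :
    ∀ j', j ≤ j' → Nat.testBit (n + m) j' = Nat.testBit n j' := fun _ =>
  Nat.testBit_eq_of_div_two_pow_eq (Nat.add_div_eq_of_mod_add_lt h)
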